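/- Let P be a partially ordered set, F a field, and x ∈ P. Then: (1) the lattice of subfunctors of h_x is finite if and only if the principal lower set ↓x = { y ∈ P : y ≤ x } is a finite set; (2) the lattice of subfunctors of h_x satisfies the ascending chain condition (every ascending chain of subfunctors stabilises) if and only if every ascending chain of lower sets of ↓x stabilises. -/

import Mathlib

open CategoryTheory CategoryTheory.Limits

noncomputable section

open Classical in
/-- `dimP x y = 1` if `y ≤ x`, and `0` otherwise. -/
def dimP {P : Type} [PartialOrder P] (x y : P) : ℕ := if y ≤ x then 1 else 0

lemma dimP_eq_one_iff {P : Type} [PartialOrder P] {x y : P} :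
    dimP x y = 1 ↔ y ≤ x := by
  unfold dimP; split <;> simp_all

lemma dimP_le_one {P : Type} [PartialOrder P] (x y : P) : dimP x y ≤ 1 := by
  unfold dimP; split <;> omega

variable (P : Type) [PartialOrder P] (F : Type) [Field F]

/-- The structure maps of the representable representation `h_x`. -/
def hMap (x s t : P) : (Fin (dimP x s) → F) →ₗ[F] (Fin (dimP x t) → F) where
  toFun f _ := if h : dimP x s = 1 then f ⟨0, by omega⟩ else 0
  map_add' f g := by
    funext k
    by_cases h : dimP x s = 1 <;> simp [h]
  map_smul' c f := by
    funext k
    by_cases h : dimP x s = 1 <;> simp [h]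

lemma hMap_apply (x s t : P) (f : Fin (dimP x s) → F) (k : Fin (dimP x t)) :
    hMap P F x s t f k = if h : dimP x s = 1 then f ⟨0, by omega⟩ else 0 := rfl

/-- The representable representation `h_x : Pᵒᵖ ⥤ ModuleCat F`, with value `F`
at `y` if `y ≤ x` and `0` otherwise, and identity structure maps whenever both
values are `F`. -/
def hRep (x : P) : Pᵒᵖ ⥤ ModuleCat.{0} F where
  obj y := ModuleCat.of F (Fin (dimP x y.unop) → F)
  map {y z} _ := ModuleCat.ofHom (hMap P F x y.unop z.unop)
  map_id y := by
    refine ModuleCat.hom_ext (LinearMap.ext fun f => ?_)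
    funext k
    show hMap P F x y.unop y.unop f k = f k
    rw [hMap_apply]
    have hk := k.isLt
    have hle := dimP_le_one x y.unop
    have h1 : dimP x y.unop = 1 := by omega
    rw [dif_pos h1]
    congr 1
    exact Fin.ext (by omega)
  map_comp {i j k} f g := by
    have hij : j.unop ≤ i.unop := (leOfHom f.unop)
    have hjk : k.unop ≤ j.unop := (leOfHom g.unop)
    refine ModuleCat.hom_ext (LinearMap.ext fun v => ?_)
    funext l
    show hMap P F x i.unop k.unop v l =
      hMap P F x j.unop k.unop (hMap P F x i.unop j.unop v) l
    simp only [hMap_apply]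
    by_cases hi : dimP x i.unop = 1
    · have hj1 : dimP x j.unop = 1 := by
        rw [dimP_eq_one_iff] at *
        exact le_trans hij hi
      rw [dif_pos hi, dif_pos hj1]
    · rw [dif_neg hi]
      by_cases hj : dimP x j.unop = 1
      · rw [dif_pos hj]
        try rw [dif_neg hi]
      · rw [dif_neg hj]

/-- A subfunctor of a representation `G : Pᵒᵖ ⥤ ModuleCat F`: a family of
submodules of the values of `G` which is closed under the structure maps. -/
@[ext]
structure Subfunctor {P : Type} [PartialOrder P] {F : Type} [Field F]
    (G : Pᵒᵖ ⥤ ModuleCat.{0} F) where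
  toFun : ∀ y : Pᵒᵖ, Submodule F (G.obj y)
  map_le : ∀ {y z : Pᵒᵖ} (f : y ⟶ z), (toFun y).map (G.map f).hom ≤ toFun z

namespace Subfunctor

variable {P F} {G : Pᵒᵖ ⥤ ModuleCat.{0} F}

instance : PartialOrder (_root_.Subfunctor G) where
  le S T := ∀ y, S.toFun y ≤ T.toFun y
  le_refl S y := le_refl _
  le_trans S T U h h' y := le_trans (h y) (h' y)
  le_antisymm S T h h' := by
    ext y v
    exact ⟨fun hv => h y hv, fun hv => h' y hv⟩

/-- The lattice of subfunctors, with pointwise join and meet. -/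
instance : Lattice (_root_.Subfunctor G) where
  sup S T := ⟨fun y => S.toFun y ⊔ T.toFun y, fun {y z} f => by
    rw [Submodule.map_sup]
    exact sup_le_sup (S.map_le f) (T.map_le f)⟩
  le_sup_left S T y := le_sup_left
  le_sup_right S T y := le_sup_right
  sup_le S T U h h' y := sup_le (h y) (h' y)
  inf S T := ⟨fun y => S.toFun y ⊓ T.toFun y, fun {y z} f =>
    le_trans (Submodule.map_inf_le _) (inf_le_inf (S.map_le f) (T.map_le f))⟩
  inf_le_left S T y := inf_le_left
  inf_le_right S T y := inf_le_right
  le_inf S T U h h' y := le_inf (h y) (h' y)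

end Subfunctor

end

/-!
Every value of `h_x` is `F` or `0`, so each of its subspaces is `⊥` or `⊤`, and the structure
maps between the nonzero values are identities. A subfunctor `S` is therefore determined by
`{y ≤ x | S(y) = F}`, which is a lower set of `↓x`, and every lower set arises this way: the
subfunctors of `h_x` and the lower sets of `↓x` are isomorphic posets. The ascending chain
condition transfers along this isomorphism, and there are finitely many lower sets of `↓x`
exactly when `↓x` is finite, since the principal ones embed `↓x` into them.
-/

theorem finite_lowerSet_iff {Q : Type*} [PartialOrder Q] : Finite (LowerSet Q) ↔ Finite Q :=
  ⟨fun _ ↦ Finite.of_injective LowerSet.Iic fun _ _ h ↦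
      Set.Iic_injective (congrArg SetLike.coe h),
    fun _ ↦ Finite.of_injective _ SetLike.coe_injective⟩

theorem monotone_chain_condition_iff_wellFoundedGT {α : Type*} [PartialOrder α] :
    (∀ c : ℕ →o α, ∃ N, ∀ m, N ≤ m → c m = c N) ↔ WellFoundedGT α := by
  simp_rw [wellFoundedGT_iff_monotone_chain_condition, eq_comm]

theorem OrderIso.monotone_chain_condition_congr {α β : Type*} [PartialOrder α] [PartialOrder β]
    (e : α ≃o β) :
    (∀ c : ℕ →o α, ∃ N, ∀ m, N ≤ m → c m = c N) ↔
      (∀ c : ℕ →o β, ∃ N, ∀ m, N ≤ m → c m = c N) := by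
  simp_rw [monotone_chain_condition_iff_wellFoundedGT]
  exact ⟨fun _ ↦ e.symm.toOrderEmbedding.wellFoundedGT,
    fun _ ↦ e.toOrderEmbedding.wellFoundedGT⟩

namespace hRep

variable {P : Type} [PartialOrder P] {F : Type} [Field F] {x : P}

theorem subsingleton_obj {y : Pᵒᵖ} (hy : ¬y.unop ≤ x) :
    Subsingleton ((hRep P F x).obj y) := by
  have h : dimP x y.unop = 0 := by simp [dimP, hy]
  change Subsingleton (Fin (dimP x y.unop) → F)
  rw [h]
  infer_instance

theorem finrank_obj {y : Pᵒᵖ} (hy : y.unop ≤ x) :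
    Module.finrank F ((hRep P F x).obj y) = 1 := by
  change Module.finrank F (Fin (dimP x y.unop) → F) = 1
  rw [Module.finrank_fin_fun, dimP_eq_one_iff.mpr hy]

theorem isSimpleOrder_submodule_obj {y : Pᵒᵖ} (hy : y.unop ≤ x) :
    IsSimpleOrder (Submodule F ((hRep P F x).obj y)) :=
  is_simple_module_of_finrank_eq_one (finrank_obj hy)

theorem map_surjective {y z : Pᵒᵖ} (f : y ⟶ z) (hy : y.unop ≤ x) :
    Function.Surjective ((hRep P F x).map f).hom := by
  have hy' : dimP x y.unop = 1 := dimP_eq_one_iff.mpr hy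
  have hz' : dimP x z.unop = 1 := dimP_eq_one_iff.mpr ((leOfHom f.unop).trans hy)
  intro w
  refine ⟨fun _ ↦ w ⟨0, by omega⟩, funext fun k ↦ ?_⟩
  change hMap P F x y.unop z.unop _ k = w k
  rw [hMap_apply, dif_pos hy']
  exact congrArg w (Fin.ext (by have := k.isLt; simp only; omega))

variable (x) in
def lowerSetOfSubfunctor (S : _root_.Subfunctor (hRep P F x)) : LowerSet {y : P // y ≤ x} where
  carrier := {q | S.toFun (.op q.1) = ⊤}
  lower' q q' hle hq := by
    have h := S.map_le (homOfLE (show q'.1 ≤ q.1 from hle)).op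
    rwa [show S.toFun _ = ⊤ from hq, Submodule.map_top, LinearMap.range_eq_top.mpr
      (map_surjective _ q.2), top_le_iff] at h

open Classical in
variable (F) in
noncomputable def subfunctorOfLowerSet (L : LowerSet {y : P // y ≤ x}) :
    _root_.Subfunctor (hRep P F x) where
  toFun y := if ∃ hy : y.unop ≤ x, ⟨y.unop, hy⟩ ∈ L then ⊤ else ⊥
  map_le {y z} f := by
    by_cases h : ∃ hy : y.unop ≤ x, ⟨y.unop, hy⟩ ∈ L
    · obtain ⟨hy, hyL⟩ := h
      have hz : z.unop ≤ x := (leOfHom f.unop).trans hy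
      have hzL : (⟨z.unop, hz⟩ : {y : P // y ≤ x}) ∈ L := L.lower (leOfHom f.unop) hyL
      exact le_top.trans_eq (if_pos ⟨hz, hzL⟩).symm
    · rw [if_neg h, Submodule.map_bot]
      exact bot_le

open Classical in
theorem lowerSetOfSubfunctor_subfunctorOfLowerSet (L : LowerSet {y : P // y ≤ x}) :
    lowerSetOfSubfunctor x (subfunctorOfLowerSet F L) = L := by
  ext q
  have := isSimpleOrder_submodule_obj (F := F) (x := x) (y := .op q.1) q.2
  change (if ∃ hq : q.1 ≤ x, ⟨q.1, hq⟩ ∈ L then ⊤ else ⊥) = ⊤ ↔ q ∈ L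
  split_ifs with h
  · exact iff_of_true rfl h.2
  · exact iff_of_false bot_ne_top fun hq ↦ h ⟨q.2, hq⟩

theorem lowerSetOfSubfunctor_le_iff {S T : _root_.Subfunctor (hRep P F x)} :
    lowerSetOfSubfunctor x S ≤ lowerSetOfSubfunctor x T ↔ S ≤ T := by
  refine ⟨fun h y ↦ ?_, fun h q hq ↦ top_le_iff.mp (hq ▸ h (.op q.1))⟩
  by_cases hy : y.unop ≤ x
  · have := isSimpleOrder_submodule_obj (F := F) hy
    obtain hS | hS := eq_bot_or_eq_top (S.toFun y)
    · exact hS ▸ bot_le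
    · exact hS ▸ (h (a := ⟨y.unop, hy⟩) hS).ge
  · have := subsingleton_obj (F := F) hy
    exact (Subsingleton.elim _ _ : S.toFun y = T.toFun y).le

variable (P F x) in
noncomputable def subfunctorOrderIsoLowerSet :
    _root_.Subfunctor (hRep P F x) ≃o LowerSet {y : P // y ≤ x} :=
  RelIso.ofSurjective (OrderEmbedding.ofMapLEIff _ fun _ _ ↦ lowerSetOfSubfunctor_le_iff)
    fun L ↦ ⟨subfunctorOfLowerSet F L, lowerSetOfSubfunctor_subfunctorOfLowerSet L⟩

end hRep

theorem subfunctor_chain_conditions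
    (P : Type) [PartialOrder P] (F : Type) [Field F] (x : P) :
    (Finite (_root_.Subfunctor (hRep P F x)) ↔ Finite {y : P // y ≤ x}) ∧
    ((∀ c : ℕ →o _root_.Subfunctor (hRep P F x), ∃ N, ∀ m, N ≤ m → c m = c N) ↔
      (∀ c : ℕ →o LowerSet {y : P // y ≤ x}, ∃ N, ∀ m, N ≤ m → c m = c N)) :=
  let e := hRep.subfunctorOrderIsoLowerSet P F x
  ⟨e.toEquiv.finite_iff.trans finite_lowerSet_iff, e.monotone_chain_condition_congr⟩
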